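/- Consider the run-and-chase game with two agents a and b, initial utilities u_a(b) = 1 and u_b(a) = −1, additively separable aggregation, and deviator-resentful agents. Then the alternating sequence where a joins b (forming {a,b}) and b then leaves (restoring singletons), repeated forever, is an infinite execution of the Nash dynamics: at every step the deviating agent strictly improves her current utility, even though b's utility for a decreases by 1 each time b leaves. -/

import Mathlib

/-!
Agent `a` only ever deviates out of the singleton `{a}`, so she abandons nobody and keeps
`u_a(b) = 1`: joining `b` gains `1 > 0`. Agent `b` loses one unit of `u_b(a)` each time she
leaves, so `u_b(a) = -1 - ⌊t/2⌋ < 0` at time `t`, and leaving gains `0 > u_b(a)`.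
-/

/-- The partition at time `t` of the run-and-chase sequence with agents
`a = 0` and `b = 1`: at odd times `{a,b}` is formed, at even times both agents
are in singletons. -/
def coalOf (t : ℕ) (i : Fin 2) : Finset (Fin 2) :=
  if t % 2 = 1 then {0, 1} else {i}

/-- The agent deviating at step `t`: at odd steps `a` joins `b`, at even steps
`b` leaves to be alone. -/
def dev (t : ℕ) : Fin 2 :=
  if t % 2 = 1 then 0 else 1

/-- Initial utilities: `u_a(b) = 1` and `u_b(a) = -1`. -/
def u0 : Fin 2 → Fin 2 → ℚ := ![![0, 1], ![-1, 0]]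

/-- Utilities evolving under deviator-resent: when an agent deviates, she
decreases her own utility for every agent of her abandoned coalition by `1`.
Here `a`'s utility for `b` stays `1` forever, while `b`'s utility for `a`
decreases by `1` each time `b` leaves. -/
def util : ℕ → Fin 2 → Fin 2 → ℚ
  | 0 => u0
  | (t + 1) => fun i j =>
      if i = dev (t + 1) ∧ j ∈ coalOf t i ∧ j ≠ i then util t i j - 1
      else util t i j

lemma coalOf_of_even {t : ℕ} (ht : t % 2 = 0) (i : Fin 2) : coalOf t i = {i} := by
  simp [coalOf, ht]

lemma coalOf_of_odd {t : ℕ} (ht : t % 2 = 1) (i : Fin 2) : coalOf t i = {0, 1} := by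
  simp [coalOf, ht]

lemma dev_of_even {t : ℕ} (ht : t % 2 = 0) : dev t = 1 := by
  simp [dev, ht]

lemma dev_of_odd {t : ℕ} (ht : t % 2 = 1) : dev t = 0 := by
  simp [dev, ht]

lemma util_succ_of_even {t : ℕ} (ht : t % 2 = 0) (i j : Fin 2) :
    util (t + 1) i j = util t i j := by
  have hdev : dev (t + 1) = 0 := dev_of_odd (by omega)
  simp only [util, hdev, coalOf_of_even ht, Finset.mem_singleton]
  grind

lemma util_succ_of_odd {t : ℕ} (ht : t % 2 = 1) :
    util (t + 1) 0 1 = util t 0 1 ∧ util (t + 1) 1 0 = util t 1 0 - 1 := by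
  have hdev : dev (t + 1) = 1 := dev_of_even (by omega)
  simp [util, hdev, coalOf_of_odd ht]

lemma util_zero_one (t : ℕ) : util t 0 1 = 1 := by
  induction t with
  | zero => rfl
  | succ t ih =>
    rcases Nat.mod_two_eq_zero_or_one t with ht | ht
    · rw [util_succ_of_even ht, ih]
    · rw [(util_succ_of_odd ht).1, ih]

lemma util_one_zero (t : ℕ) : util t 1 0 = -1 - (t / 2 : ℕ) := by
  induction t with
  | zero => simp [util, u0]
  | succ t ih =>
    rcases Nat.mod_two_eq_zero_or_one t with ht | ht
    · rw [util_succ_of_even ht, ih, show (t + 1) / 2 = t / 2 by omega]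
    · rw [(util_succ_of_odd ht).2, ih, show (t + 1) / 2 = t / 2 + 1 by omega]
      push_cast
      ring

/-- The alternating run-and-chase sequence (`a` joins `b`, then `b` leaves,
repeated forever) is an infinite execution of the Nash dynamics for
deviator-resentful agents with additively separable utilities: at every step
the deviating agent strictly improves her current utility. -/
theorem stmt_13 :
    ∀ t : ℕ,
      (∑ j ∈ (coalOf t (dev (t + 1))).erase (dev (t + 1)), util t (dev (t + 1)) j) <
        ∑ j ∈ (coalOf (t + 1) (dev (t + 1))).erase (dev (t + 1)), util t (dev (t + 1)) j := by
  intro t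
  rcases Nat.mod_two_eq_zero_or_one t with ht | ht
  · have ht' : (t + 1) % 2 = 1 := by omega
    simp [dev_of_odd ht', coalOf_of_even ht, coalOf_of_odd ht', util_zero_one]
  · have ht' : (t + 1) % 2 = 0 := by omega
    have hb : util t 1 0 < 0 := by rw [util_one_zero]; linarith [(t / 2 : ℕ).cast_nonneg (α := ℚ)]
    simpa [dev_of_even ht', coalOf_of_odd ht, coalOf_of_even ht'] using hb
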